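/- For $0 < x < 2/\pi$ and each fixed $n\ge 0$, the sequence $m \mapsto \frac{2}{\sqrt{2\pi x^3}}(2m+1)\exp\left(-\frac{(2m+1)^2}{2x}\right)$ is strictly decreasing in $m$, and for $x > 2/\pi$ the sequence $m \mapsto \frac{\pi}{2}(2m+1)\exp\left(-\frac{\pi^2 x (2m+1)^2}{8}\right)$ is strictly decreasing in $m$. Consequently, by the alternating series estimate, the truncation error of the corresponding alternating series at order $n$ is bounded by the $(n{+}1)$-st term: for $0<x<2/\pi$, $\left|\sum_{m=0}^\infty(-1)^m a_m(x) - \sum_{m=0}^{n-1}(-1)^m a_m(x)\right| \le a_n(x)$ where $a_m(x) = \frac{2}{\sqrt{2\pi x^3}}(2m+1)e^{-(2m+1)^2/(2x)}$, and analogously for $x>2/\pi$ with $a_m(x) = \frac{\pi}{2}(2m+1)e^{-\pi^2 x(2m+1)^2/8}$. -/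
import Mathlib

open Filter Finset Topology


lemma alt_aux (C k : ℝ) (hC : 0 < C) (hk : (3:ℝ)/4 ≤ k)
    (f : ℕ → ℝ)
    (hf : ∀ m : ℕ, f m = C * (2 * (m : ℝ) + 1) * Real.exp (-(k * (2 * (m : ℝ) + 1) ^ 2))) :
    StrictAnti f ∧ ∀ n : ℕ,
      |(∑' m : ℕ, (-1 : ℝ) ^ m * f m) - ∑ m ∈ Finset.range n, (-1 : ℝ) ^ m * f m| ≤ f n := by
  have hk0 : 0 < k := by linarith
  have hfpos : ∀ m : ℕ, 0 < f m := by
    intro m; rw [hf]; positivity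
  have hsa : StrictAnti f := by
    refine strictAnti_nat_of_succ_lt fun m => ?_
    rw [hf, hf]
    push_cast
    have hexp : Real.exp (-(k * (2 * (m:ℝ) + 1) ^ 2))
        = Real.exp (-(k * (2 * ((m:ℝ) + 1) + 1) ^ 2)) * Real.exp (k * (8 * (m:ℝ) + 8)) := by
      rw [← Real.exp_add]; ring_nf
    rw [hexp]
    have h2 : k * (8 * (m:ℝ) + 8) + 1 < Real.exp (k * (8 * (m:ℝ) + 8)) :=
      Real.add_one_lt_exp (by positivity)
    have hm0 : (0:ℝ) ≤ (m:ℝ) := Nat.cast_nonneg m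
    have h1 : (2 * ((m:ℝ) + 1) + 1) < (2 * (m:ℝ) + 1) * Real.exp (k * (8 * (m:ℝ) + 8)) := by
      nlinarith [h2, hm0, hk]
    have hpos : 0 < C * Real.exp (-(k * (2 * ((m:ℝ) + 1) + 1) ^ 2)) := by positivity
    calc C * (2 * ((m:ℝ) + 1) + 1) * Real.exp (-(k * (2 * ((m:ℝ) + 1) + 1) ^ 2))
        < C * ((2 * (m:ℝ) + 1) * Real.exp (k * (8 * (m:ℝ) + 8)))
            * Real.exp (-(k * (2 * ((m:ℝ) + 1) + 1) ^ 2)) := by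
          nlinarith [mul_lt_mul_of_pos_left h1 hpos]
      _ = C * (2 * (m:ℝ) + 1) * (Real.exp (-(k * (2 * ((m:ℝ) + 1) + 1) ^ 2))
            * Real.exp (k * (8 * (m:ℝ) + 8))) := by ring
  have hsum : Summable f := by
    have hr : Real.exp (-(2*k)) < 1 := by
      rw [Real.exp_lt_one_iff]; linarith
    have hr0 : (0:ℝ) ≤ Real.exp (-(2*k)) := (Real.exp_pos _).le
    have hg : Summable (fun m : ℕ => C * Real.exp (-k) * (2 * (m:ℝ) + 1) * Real.exp (-(2*k)) ^ m) := by
      have h1 : Summable (fun m : ℕ => (m:ℝ) * Real.exp (-(2*k)) ^ m) := by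
        simpa using summable_pow_mul_geometric_of_norm_lt_one 1
          (r := Real.exp (-(2*k))) (by rwa [Real.norm_eq_abs, abs_of_nonneg hr0])
      have h2 : Summable (fun m : ℕ => Real.exp (-(2*k)) ^ m) :=
        summable_geometric_of_lt_one hr0 hr
      exact (((h1.mul_left 2).add h2).mul_left (C * Real.exp (-k))).congr fun m => by ring
    refine hg.of_nonneg_of_le (fun m => (hfpos m).le) fun m => ?_
    rw [hf]
    have hm0 : (0:ℝ) ≤ (m:ℝ) := Nat.cast_nonneg m
    have hexp : Real.exp (-(k * (2 * (m:ℝ) + 1) ^ 2)) ≤ Real.exp (-k) * Real.exp (-(2*k)) ^ m := by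
      rw [← Real.exp_nat_mul, ← Real.exp_add, Real.exp_le_exp]
      nlinarith [mul_nonneg hk0.le (mul_nonneg hm0 hm0), mul_nonneg hk0.le hm0]
    calc C * (2 * (m:ℝ) + 1) * Real.exp (-(k * (2 * (m:ℝ) + 1) ^ 2))
        ≤ C * (2 * (m:ℝ) + 1) * (Real.exp (-k) * Real.exp (-(2*k)) ^ m) := by
          exact mul_le_mul_of_nonneg_left hexp (by positivity)
      _ = C * Real.exp (-k) * (2 * (m:ℝ) + 1) * Real.exp (-(2*k)) ^ m := by ring
  have hsum' : Summable (fun m : ℕ => (-1 : ℝ) ^ m * f m) := by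
    refine Summable.of_norm ?_
    refine hsum.congr fun m => ?_
    rw [norm_mul, norm_pow, norm_neg, norm_one, one_pow, one_mul,
      Real.norm_eq_abs, abs_of_pos (hfpos m)]
  set l := ∑' m : ℕ, (-1 : ℝ) ^ m * f m with hl
  have htend : Tendsto (fun n => ∑ i ∈ Finset.range n, (-1 : ℝ) ^ i * f i) atTop (𝓝 l) :=
    hsum'.hasSum.tendsto_sum_nat
  refine ⟨hsa, fun n => ?_⟩
  have hanti := hsa.antitone
  rcases Nat.even_or_odd n with ⟨c, hc⟩ | ⟨c, hc⟩
  · -- n = 2c : S_n ≤ l ≤ S_n + f n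
    have hlo : ∑ i ∈ Finset.range (2 * c), (-1 : ℝ) ^ i * f i ≤ l :=
      hanti.alternating_series_le_tendsto htend c
    have hhi : l ≤ ∑ i ∈ Finset.range (2 * c + 1), (-1 : ℝ) ^ i * f i :=
      hanti.tendsto_le_alternating_series htend c
    have hstep : ∑ i ∈ Finset.range (2 * c + 1), (-1 : ℝ) ^ i * f i
        = ∑ i ∈ Finset.range (2 * c), (-1 : ℝ) ^ i * f i + f (2 * c) := by
      rw [Finset.sum_range_succ]
      simp [pow_mul]
    have hn : n = 2 * c := by omega
    subst hn
    rw [abs_le]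
    constructor
    · linarith [hfpos (2 * c)]
    · linarith [hhi.trans_eq hstep]
  · -- n = 2c+1 : S_n - f n ≤ l ≤ S_n
    have hhi : l ≤ ∑ i ∈ Finset.range (2 * c + 1), (-1 : ℝ) ^ i * f i :=
      hanti.tendsto_le_alternating_series htend c
    have hlo : ∑ i ∈ Finset.range (2 * (c + 1)), (-1 : ℝ) ^ i * f i ≤ l :=
      hanti.alternating_series_le_tendsto htend (c + 1)
    have hstep : ∑ i ∈ Finset.range (2 * (c + 1)), (-1 : ℝ) ^ i * f i
        = ∑ i ∈ Finset.range (2 * c + 1), (-1 : ℝ) ^ i * f i - f (2 * c + 1) := by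
      have : 2 * (c + 1) = (2 * c + 1) + 1 := by ring
      rw [this, Finset.sum_range_succ]
      have : (-1 : ℝ) ^ (2 * c + 1) = -1 := by
        rw [pow_succ, pow_mul]; simp
      rw [this]; ring
    have hn : n = 2 * c + 1 := by omega
    subst hn
    rw [abs_le]
    constructor
    · linarith [hstep ▸ hlo]
    · linarith [hfpos (2 * c + 1)]

/-- the terms of the two series representations of the Brownian exit-time
density are strictly decreasing in `m` (for `0 < x < 2/π` and `x > 2/π` respectively),
and consequently the alternating-series truncation error at order `n` is bounded by the
`(n+1)`-st term. -/
theorem exit_time_density_alternating_bounds (a b : ℕ → ℝ → ℝ)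
    (ha : ∀ (m : ℕ) (x : ℝ), a m x =
      2 / Real.sqrt (2 * Real.pi * x ^ 3) * (2 * (m : ℝ) + 1) *
        Real.exp (-((2 * (m : ℝ) + 1) ^ 2 / (2 * x))))
    (hb : ∀ (m : ℕ) (x : ℝ), b m x =
      Real.pi / 2 * (2 * (m : ℝ) + 1) *
        Real.exp (-(Real.pi ^ 2 * x * (2 * (m : ℝ) + 1) ^ 2 / 8))) :
    (∀ x : ℝ, 0 < x → x < 2 / Real.pi →
      (StrictAnti fun m : ℕ => a m x) ∧
        ∀ n : ℕ,
          |(∑' m : ℕ, (-1 : ℝ) ^ m * a m x) - ∑ m ∈ Finset.range n, (-1 : ℝ) ^ m * a m x|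
            ≤ a n x) ∧
    (∀ x : ℝ, 2 / Real.pi < x →
      (StrictAnti fun m : ℕ => b m x) ∧
        ∀ n : ℕ,
          |(∑' m : ℕ, (-1 : ℝ) ^ m * b m x) - ∑ m ∈ Finset.range n, (-1 : ℝ) ^ m * b m x|
            ≤ b n x) := by
  constructor
  · intro x hx0 hx2
    have hC : 0 < 2 / Real.sqrt (2 * Real.pi * x ^ 3) := by
      have := Real.pi_pos
      positivity
    have hx23 : x < 2 / 3 := by
      refine hx2.trans_le ?_
      have h3 : (3:ℝ) ≤ Real.pi := Real.pi_gt_three.le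
      rw [div_le_div_iff₀ Real.pi_pos (by norm_num)]
      linarith
    have hk : (3:ℝ)/4 ≤ 1 / (2 * x) := by
      rw [le_div_iff₀ (by positivity)]
      nlinarith
    exact alt_aux _ _ hC hk (fun m => a m x) (fun m => by simp only [ha]; ring_nf)
  · intro x hx
    have hpi := Real.pi_pos
    have hx0 : 0 < x := lt_trans (by positivity) hx
    have h2 : 2 < x * Real.pi := by rwa [div_lt_iff₀ hpi] at hx
    have hC : 0 < Real.pi / 2 := by positivity
    have hk : (3:ℝ)/4 ≤ Real.pi ^ 2 * x / 8 := by
      nlinarith [Real.pi_gt_three]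
    exact alt_aux _ _ hC hk (fun m => b m x) (fun m => by simp only [hb]; ring_nf)
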